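/- Let α ∈ (1, 3/2) and b_k = 1/Γ(α(k+1)). Then for every k ≥ 0, the Cauchy square satisfies (b^{*2})_k = Σ_{ℓ=0}^k b_ℓ b_{k−ℓ} ≤ (α(k+2) − 1)(k+1) · 2^{αk+2} / Γ(α(k+2)). -/
import Mathlib

open Real Finset

/-- Log-convexity midpoint inequality for Gamma. -/
lemma gamma_mid_sq_le {x y : ℝ} (hx : 0 < x) (hy : 0 < y) :
    Real.Gamma ((x + y) / 2) ^ 2 ≤ Real.Gamma x * Real.Gamma y := by
  have h := Real.convexOn_log_Gamma.2 (Set.mem_Ioi.mpr hx) (Set.mem_Ioi.mpr hy)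
    (by norm_num : (0:ℝ) ≤ 1/2) (by norm_num : (0:ℝ) ≤ 1/2) (by norm_num)
  simp only [Function.comp_apply, smul_eq_mul] at h
  have hmid : (1/2 : ℝ) * x + (1/2 : ℝ) * y = (x + y) / 2 := by ring
  rw [hmid] at h
  have hgx : 0 < Real.Gamma x := Real.Gamma_pos_of_pos hx
  have hgy : 0 < Real.Gamma y := Real.Gamma_pos_of_pos hy
  have hgm : 0 < Real.Gamma ((x + y) / 2) :=
    Real.Gamma_pos_of_pos (by linarith)
  have h2 : Real.log (Real.Gamma ((x + y) / 2) ^ 2) ≤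
      Real.log (Real.Gamma x * Real.Gamma y) := by
    rw [Real.log_pow, Real.log_mul hgx.ne' hgy.ne']
    push_cast
    linarith
  exact (Real.log_le_log_iff (by positivity) (by positivity)).mp h2

/-- Key per-term bound: for `x, y ≥ 1` with `x + y = s`,
`Γ(s) ≤ (s-1) * 2^(s-1) * Γ(x) * Γ(y)`. -/
lemma gamma_sum_le {x y : ℝ} (hx : 1 ≤ x) (hy : 1 ≤ y) :
    Real.Gamma (x + y) ≤ (x + y - 1) * 2 ^ (x + y - 1) * (Real.Gamma x * Real.Gamma y) := by
  set s := x + y with hs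
  have hs2 : 2 ≤ s := by simp only [hs]; linarith
  set u := s / 2 with hu
  have hu1 : 1 ≤ u := by simp only [hu]; linarith
  have hupos : 0 < u := by linarith
  -- duplication: Γ(u) Γ(u+1/2) = Γ(2u) 2^(1-2u) √π
  have hdup := Real.Gamma_mul_Gamma_add_half u
  have h2u : 2 * u = s := by simp [hu]; ring
  rw [h2u] at hdup
  -- Γ(u+1/2)^2 ≤ Γ(u) Γ(u+1) = u Γ(u)^2
  have hmid2 : Real.Gamma (u + 1/2) ^ 2 ≤ Real.Gamma u * Real.Gamma (u + 1) := by
    have := gamma_mid_sq_le hupos (by linarith : (0:ℝ) < u + 1)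
    have : (u + (u + 1)) / 2 = u + 1/2 := by ring
    rw [← this]
    exact gamma_mid_sq_le hupos (by linarith)
  rw [Real.Gamma_add_one hupos.ne'] at hmid2
  have hgu : 0 < Real.Gamma u := Real.Gamma_pos_of_pos hupos
  have hguh : 0 < Real.Gamma (u + 1/2) := Real.Gamma_pos_of_pos (by linarith)
  -- so Γ(u+1/2) ≤ √u Γ(u) ≤ u Γ(u) since u ≥ 1
  have hhalf : Real.Gamma (u + 1/2) ≤ u * Real.Gamma u := by
    have hB : 0 < u * Real.Gamma u := mul_pos hupos hgu
    have hA2 : Real.Gamma (u + 1/2) ^ 2 ≤ (u * Real.Gamma u) ^ 2 := by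
      refine hmid2.trans ?_
      have : Real.Gamma u ≤ u * Real.Gamma u := le_mul_of_one_le_left hgu.le hu1
      nlinarith
    nlinarith [hA2, hguh, hB, mul_pos hguh hB]
  -- Γ(s) = Γ(u)Γ(u+1/2) 2^(s-1) / √π ≤ u Γ(u)^2 2^(s-1)
  have hppos : (0:ℝ) < 2 ^ (1 - s) := Real.rpow_pos_of_pos two_pos _
  have hgs : Real.Gamma s = Real.Gamma u * Real.Gamma (u + 1/2) / (2 ^ (1 - s) * √π) := by
    rw [eq_div_iff (by positivity)]
    linear_combination -hdup
  have hsqrtpi : 1 ≤ √π := by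
    rw [show (1:ℝ) = √1 by simp]
    exact Real.sqrt_le_sqrt (by linarith [Real.pi_gt_three])
  have hinv : (2:ℝ) ^ (1 - s) * √π ≥ 2 ^ (1 - s) := by
    nlinarith
  have hstep1 : Real.Gamma s ≤ Real.Gamma u * Real.Gamma (u + 1/2) / 2 ^ (1 - s) := by
    rw [hgs]
    apply div_le_div_of_nonneg_left (by positivity) hppos hinv
  have hrw : (2:ℝ) ^ (1 - s) = (2 ^ (s - 1))⁻¹ := by
    rw [← Real.rpow_neg (by norm_num)]; ring_nf
  have hstep2 : Real.Gamma u * Real.Gamma (u + 1/2) / 2 ^ (1 - s)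
      = Real.Gamma u * Real.Gamma (u + 1/2) * 2 ^ (s - 1) := by
    rw [hrw, div_eq_mul_inv, inv_inv]
  -- Γ(u)^2 ≤ Γ(x)Γ(y) by midpoint convexity
  have hmid : Real.Gamma u ^ 2 ≤ Real.Gamma x * Real.Gamma y := by
    have := gamma_mid_sq_le (by linarith : (0:ℝ) < x) (by linarith : (0:ℝ) < y)
    simpa [hu, hs] using this
  have hupow : (0:ℝ) < 2 ^ (s - 1) := Real.rpow_pos_of_pos two_pos _
  have hchain : Real.Gamma s ≤ u * Real.Gamma u ^ 2 * 2 ^ (s - 1) := by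
    calc Real.Gamma s ≤ Real.Gamma u * Real.Gamma (u + 1/2) * 2 ^ (s - 1) := by
            rw [← hstep2]; exact hstep1
      _ ≤ Real.Gamma u * (u * Real.Gamma u) * 2 ^ (s - 1) := by
            apply mul_le_mul_of_nonneg_right _ hupow.le
            exact mul_le_mul_of_nonneg_left hhalf hgu.le
      _ = u * Real.Gamma u ^ 2 * 2 ^ (s - 1) := by ring
  have hules : u ≤ s - 1 := by simp only [hu]; linarith
  calc Real.Gamma s ≤ u * Real.Gamma u ^ 2 * 2 ^ (s - 1) := hchain
    _ ≤ (s - 1) * (Real.Gamma x * Real.Gamma y) * 2 ^ (s - 1) := by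
        apply mul_le_mul_of_nonneg_right _ hupow.le
        apply mul_le_mul hules hmid (by positivity) (by linarith)
    _ = (s - 1) * 2 ^ (s - 1) * (Real.Gamma x * Real.Gamma y) := by ring

/-- For `α ∈ (1, 3/2)` and `b_k = 1/Γ(α(k+1))`, the Cauchy square satisfies
`(b^{*2})_k ≤ (α(k+2)-1)(k+1) 2^(αk+2) / Γ(α(k+2))`. -/
theorem cauchy_square_b_bound (α : ℝ) (hα1 : 1 < α) (hα2 : α < 3 / 2) (k : ℕ) :
    (∑ ℓ ∈ Finset.range (k + 1),
        (1 / Real.Gamma (α * ((ℓ : ℝ) + 1))) * (1 / Real.Gamma (α * ((k : ℝ) - ℓ + 1))))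
      ≤ (α * ((k : ℝ) + 2) - 1) * ((k : ℝ) + 1) * 2 ^ (α * k + 2) /
          Real.Gamma (α * ((k : ℝ) + 2)) := by
  set s := α * ((k : ℝ) + 2) with hsdef
  have hk0 : (0:ℝ) ≤ (k : ℝ) := Nat.cast_nonneg k
  have hs2 : 2 < s := by nlinarith
  have hgs : 0 < Real.Gamma s := Real.Gamma_pos_of_pos (by linarith)
  have hpow : (0:ℝ) < 2 ^ (α * k + 2) := Real.rpow_pos_of_pos two_pos _
  -- per-term bound
  have hterm : ∀ ℓ ∈ Finset.range (k + 1),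
      (1 / Real.Gamma (α * ((ℓ : ℝ) + 1))) * (1 / Real.Gamma (α * ((k : ℝ) - ℓ + 1)))
        ≤ (s - 1) * 2 ^ (α * k + 2) / Real.Gamma s := by
    intro ℓ hℓ
    have hℓk : (ℓ : ℝ) ≤ (k : ℝ) := by
      exact_mod_cast Nat.lt_succ_iff.mp (Finset.mem_range.mp hℓ)
    set x := α * ((ℓ : ℝ) + 1) with hxdef
    set y := α * ((k : ℝ) - ℓ + 1) with hydef
    have hℓ0 : (0:ℝ) ≤ (ℓ : ℝ) := Nat.cast_nonneg ℓ
    have hx1 : 1 ≤ x := by nlinarith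
    have hy1 : 1 ≤ y := by nlinarith
    have hxy : x + y = s := by simp only [hxdef, hydef, hsdef]; ring
    have hgx : 0 < Real.Gamma x := Real.Gamma_pos_of_pos (by linarith)
    have hgy : 0 < Real.Gamma y := Real.Gamma_pos_of_pos (by linarith)
    have hkey := gamma_sum_le hx1 hy1
    rw [hxy] at hkey
    -- 2^(s-1) ≤ 2^(αk+2) since s - 1 = αk + 2α - 1 ≤ αk + 2
    have hexp : (2:ℝ) ^ (s - 1) ≤ 2 ^ (α * k + 2) := by
      apply Real.rpow_le_rpow_of_exponent_le one_le_two
      simp only [hsdef]; nlinarith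
    have hkey2 : Real.Gamma s ≤ (s - 1) * 2 ^ (α * k + 2) * (Real.Gamma x * Real.Gamma y) := by
      refine hkey.trans ?_
      apply mul_le_mul_of_nonneg_right _ (by positivity)
      apply mul_le_mul_of_nonneg_left hexp (by linarith)
    rw [one_div_mul_one_div, div_le_div_iff₀ (by positivity) hgs] at *
    rw [one_mul]
    calc Real.Gamma s ≤ (s - 1) * 2 ^ (α * k + 2) * (Real.Gamma x * Real.Gamma y) := hkey2
      _ = (s - 1) * 2 ^ (α * k + 2) * (Real.Gamma x * Real.Gamma y) := rfl
  calc (∑ ℓ ∈ Finset.range (k + 1),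
        (1 / Real.Gamma (α * ((ℓ : ℝ) + 1))) * (1 / Real.Gamma (α * ((k : ℝ) - ℓ + 1))))
      ≤ ∑ ℓ ∈ Finset.range (k + 1), (s - 1) * 2 ^ (α * k + 2) / Real.Gamma s :=
        Finset.sum_le_sum hterm
    _ = (k + 1 : ℝ) * ((s - 1) * 2 ^ (α * k + 2) / Real.Gamma s) := by
        rw [Finset.sum_const, Finset.card_range]; push_cast; ring
    _ = (s - 1) * ((k : ℝ) + 1) * 2 ^ (α * k + 2) / Real.Gamma s := by ring
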